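/- arXiv:2102.02029 — 2 statements merged into one kernel-verified Lean document; each statement's English description precedes it below -/
import Mathlib

section
/- Suppose f satisfies quadratic growth with parameter α > 0 w.r.t. K. Let C ≥ f(x_1) − f* and M ≥ max{ (β/α)(4 + 8dμ²D_{F*}²), 1/2 } for some μ > 0. Consider sequences generated as follows: x_1 ∈ V; at each step t ≥ 1, x_t = ∑_{i=1}^{k_t} λ_i v_i is a convex combination of vertices v_i ∈ V, v_{k_t+1} ∈ argmin_{u∈V} ( uᵀ∇f(x_t) + βρ_t‖u − x_t‖² ) with ρ_t = min{ √( (2Cdμ²/α)·exp(−(t−1)/(4M)) ), 1 } / (2M), and x_{t+1} minimizes either x ↦ xᵀ∇f(x_t) + (β/2)‖x − x_t‖² or f itself over conv(v_1,…,v_{k_t+1}). Assume additionally that for every t, letting x_t* ∈ X* be the point of X* closest to x_t, there exist Δ*_i ∈ [0,λ_i] and z ∈ F* such that x_t* = ∑_{i=1}^{k_t} (λ_i − Δ*_i)v_i + (∑Δ*_i)z and ∑_{i=1}^{k_t} Δ*_i ≤ min{ √d·μ·‖x_t − x_t*‖, 1 }. Then for all t ≥ 1: f(x_t) − f* ≤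 C·exp(−(t−1)/(4M)). -/
open scoped RealInnerProductSpace BigOperators
open Metric Set
open AffineMap (lineMap)

/-!
Let `h ≤ K := C e^{-(t-1)/(4M)}` be the gap at step `t`, `x*` the point of `X*` nearest to `xₜ`,
`r = ‖xₜ - x*‖`, and `x* = ∑ (λᵢ - Δᵢ) vᵢ + Δ z` the assumed decomposition. Replacing `z` by the
new vertex `w` gives a point `u = x* + Δ (w - z)` of the hull over which `xₜ₊₁` is chosen, so by
the descent lemma `xₜ₊₁` does at least as well as `xₜ + s (u - xₜ)` with `s = 1/(2M)`.
Convexity gives `⟪∇f(xₜ), x* - xₜ⟫ ≤ -h`. As `z` is a convex combination of vertices of `F*`,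
all within `D + r` of `xₜ`, optimality of `w` for the regularized linear oracle gives
`⟪∇f(xₜ), w - z⟫ ≤ βρ ((D + r)² - ‖w - xₜ‖²)`, and the negative term pays for the `Δ ‖w - xₜ‖`
part of `‖u - xₜ‖`. Quadratic growth gives `r² ≤ 2K/α`, hence `Δ ≤ min(√d μ r, 1) ≤ 2Mρₜ`, and
collecting terms yields `h' ≤ (1 - s) K + s² M K = (1 - 1/(4M)) K ≤ e^{-1/(4M)} K`.
-/

lemma sum_smul_add_smul_mem_convexHull_insert {E ι : Type*} [AddCommGroup E] [Module ℝ E]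
    [Fintype ι] (v : ι → E) (w : E) {a : ι → ℝ} {b : ℝ} (ha : ∀ i, 0 ≤ a i) (hb : 0 ≤ b)
    (hab : ∑ i, a i + b = 1) :
    ∑ i, a i • v i + b • w ∈ convexHull ℝ (insert w (range v)) := by
  have h := (convex_convexHull ℝ (insert w (range v))).sum_mem
    (t := Finset.univ) (w := fun o : Option ι => o.elim b a) (z := fun o => o.elim w v)
    (by rintro (_ | i) -; exacts [hb, ha i])
    (by rw [Fintype.sum_option]; simpa [add_comm] using hab)
    (by
      rintro (_ | i) -
      exacts [subset_convexHull ℝ _ (mem_insert w _),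
        subset_convexHull ℝ _ (mem_insert_of_mem w (mem_range_self i))])
  rw [Fintype.sum_option] at h
  simpa [add_comm] using h

section InnerProductSpace

variable {E : Type*} [NormedAddCommGroup E] [InnerProductSpace ℝ E]

lemma inner_sub_le_of_forall_inner_add_sq_le {V F : Set E} {a p w z xs : E} {c D : ℝ}
    (hc : 0 ≤ c) (hw : ∀ u ∈ V, ⟪a, w⟫ + c * ‖w - p‖ ^ 2 ≤ ⟪a, u⟫ + c * ‖u - p‖ ^ 2)
    (hD : ∀ u ∈ F, ‖u - xs‖ ≤ D) (hz : z ∈ convexHull ℝ (V ∩ F)) :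
    ⟪a, w - z⟫ ≤ c * ((D + ‖p - xs‖) ^ 2 - ‖w - p‖ ^ 2) := by
  have hbound : V ∩ F ⊆ {u | ⟪a, w⟫ + c * ‖w - p‖ ^ 2 - c * (D + ‖p - xs‖) ^ 2 ≤ ⟪a, u⟫} := by
    rintro u ⟨huV, huF⟩
    have hdist : ‖u - p‖ ≤ D + ‖p - xs‖ :=
      (norm_sub_le_norm_sub_add_norm_sub u xs p).trans
        (by rw [norm_sub_rev xs]; gcongr; exact hD u huF)
    have := hw u huV
    simp only [mem_ofPred_eq]
    nlinarith [pow_le_pow_left₀ (norm_nonneg _) hdist 2]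
  have := convexHull_min hbound (convex_halfSpace_ge (innerₛₗ ℝ a).isLinear _) hz
  simp only [mem_ofPred_eq] at this
  rw [inner_sub_right]
  linarith

lemma step_quadratic_term_le {Δ m r D W n : ℝ} (hΔ0 : 0 ≤ Δ) (hΔm : Δ ≤ m) (hm1 : m ≤ 1)
    (hn0 : 0 ≤ n) (hn : n ≤ (1 - Δ) * r + Δ * W + Δ * D) :
    Δ * m * ((D + r) ^ 2 - W ^ 2) + n ^ 2 / 2 ≤ 2 * r ^ 2 + 4 * m ^ 2 * D ^ 2 := by
  have hΔm0 : 0 ≤ Δ * m := mul_nonneg hΔ0 (hΔ0.trans hΔm)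
  have hn2 : n ^ 2 / 2 ≤ ((1 - Δ) * r + Δ * D) ^ 2 + Δ * m * W ^ 2 := by
    nlinarith [pow_le_pow_left₀ hn0 hn 2, sq_nonneg ((1 - Δ) * r + Δ * D - Δ * W),
      mul_nonneg (mul_nonneg hΔ0 (sub_nonneg.2 hΔm)) (sq_nonneg W)]
  have hr : Δ * m + (1 - Δ) ^ 2 ≤ 1 := by nlinarith
  have hD : Δ * m + Δ ^ 2 ≤ 2 * m ^ 2 := by nlinarith
  nlinarith [add_sq_le (a := (1 - Δ) * r) (b := Δ * D),
    mul_le_mul_of_nonneg_left (add_sq_le (a := D) (b := r)) hΔm0,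
    mul_le_mul_of_nonneg_right hr (sq_nonneg r), mul_le_mul_of_nonneg_right hD (sq_nonneg D)]

variable [CompleteSpace E] {f : E → ℝ} {g : E → E}

lemma hasDerivAt_comp_lineMap (hgrad : ∀ y, HasGradientAt f (g y) y) (p q : E) (s : ℝ) :
    HasDerivAt (fun τ => f (lineMap p q τ)) ⟪g (lineMap p q s), q - p⟫ s := by
  simpa [Function.comp_def, InnerProductSpace.toDual_apply_apply] using
    (hgrad _).hasFDerivAt.comp_hasDerivAt s AffineMap.hasDerivAt_lineMap

lemma ConvexOn.add_inner_sub_le (hfconv : ConvexOn ℝ univ f)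
    (hgrad : ∀ y, HasGradientAt f (g y) y) (p q : E) :
    f p + ⟪g p, q - p⟫ ≤ f q := by
  have hline : ConvexOn ℝ univ (fun τ : ℝ => f (lineMap p q τ)) := by
    have h := hfconv.comp_affineMap (lineMap (k := ℝ) p q)
    rw [preimage_univ] at h
    exact h
  have := hline.le_slope_of_hasDerivAt (mem_univ 0) (mem_univ 1) zero_lt_one
    (hasDerivAt_comp_lineMap hgrad p q 0)
  simp only [AffineMap.lineMap_apply_zero, AffineMap.lineMap_apply_one, slope_def_field, sub_zero,
    div_one] at this
  linarith

lemma le_add_inner_add_sq_of_lipschitz_gradient (hgrad : ∀ y, HasGradientAt f (g y) y) {β : ℝ}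
    (hsmooth : ∀ y z, ‖g y - g z‖ ≤ β * ‖y - z‖) (p q : E) :
    f q ≤ f p + ⟪g p, q - p⟫ + β / 2 * ‖q - p‖ ^ 2 := by
  have hB : ∀ s : ℝ, HasDerivAt (fun s => f p + s * ⟪g p, q - p⟫ + β / 2 * s ^ 2 * ‖q - p‖ ^ 2)
      (⟪g p, q - p⟫ + β * s * ‖q - p‖ ^ 2) s := by
    intro s
    exact ((((hasDerivAt_id s).mul_const ⟪g p, q - p⟫).const_add (f p)).add
      (((hasDerivAt_pow 2 s).const_mul (β / 2)).mul_const (‖q - p‖ ^ 2))).congr_deriv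
      (by simp only [one_mul, Nat.cast_ofNat, pow_one, Nat.add_one_sub_one]; ring)
  have hderiv_le : ∀ s ∈ Ico (0 : ℝ) 1,
      ⟪g (lineMap p q s), q - p⟫ ≤ ⟪g p, q - p⟫ + β * s * ‖q - p‖ ^ 2 := by
    rintro s ⟨hs0, -⟩
    have hdist : ‖lineMap p q s - p‖ = s * ‖q - p‖ := by
      rw [AffineMap.lineMap_apply_module', add_sub_cancel_right, norm_smul, Real.norm_of_nonneg hs0]
    calc ⟪g (lineMap p q s), q - p⟫
        = ⟪g p, q - p⟫ + ⟪g (lineMap p q s) - g p, q - p⟫ := by rw [inner_sub_left]; ring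
      _ ≤ ⟪g p, q - p⟫ + ‖g (lineMap p q s) - g p‖ * ‖q - p‖ := by
          gcongr; exact real_inner_le_norm _ _
      _ ≤ ⟪g p, q - p⟫ + β * (s * ‖q - p‖) * ‖q - p‖ := by
          gcongr; rw [← hdist]; exact hsmooth _ _
      _ = ⟪g p, q - p⟫ + β * s * ‖q - p‖ ^ 2 := by ring
  have := image_le_of_deriv_right_le_deriv_boundary
    (fun s _ => (hasDerivAt_comp_lineMap hgrad p q s).continuousAt.continuousWithinAt)
    (fun s _ => (hasDerivAt_comp_lineMap hgrad p q s).hasDerivWithinAt)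
    (by simp) (fun s _ => (hB s).continuousAt.continuousWithinAt)
    (fun s _ => (hB s).hasDerivWithinAt) hderiv_le (right_mem_Icc.2 zero_le_one)
  simpa using this

lemma le_add_inner_add_sq_of_corrective_step (hgrad : ∀ y, HasGradientAt f (g y) y) {β : ℝ}
    (hsmooth : ∀ y z, ‖g y - g z‖ ≤ β * ‖y - z‖) {T : Set E} {p q : E}
    (hstep : (q ∈ T ∧ ∀ y ∈ T,
        ⟪g p, q⟫ + β / 2 * ‖q - p‖ ^ 2 ≤ ⟪g p, y⟫ + β / 2 * ‖y - p‖ ^ 2) ∨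
      (q ∈ T ∧ ∀ y ∈ T, f q ≤ f y)) :
    ∀ y ∈ T, f q ≤ f p + ⟪g p, y - p⟫ + β / 2 * ‖y - p‖ ^ 2 := by
  intro y hy
  rcases hstep with ⟨-, hmin⟩ | ⟨-, hmin⟩
  · have hdescent := le_add_inner_add_sq_of_lipschitz_gradient hgrad hsmooth p q
    have := hmin y hy
    rw [inner_sub_right] at hdescent ⊢
    linarith
  · exact (hmin y hy).trans (le_add_inner_add_sq_of_lipschitz_gradient hgrad hsmooth p y)

theorem gap_succ_le_of_vertex_decomposition {ι : Type*} [Fintype ι]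
    (hfconv : ConvexOn ℝ univ f) (hgrad : ∀ y, HasGradientAt f (g y) y) {β : ℝ} (hβ : 0 ≤ β)
    {V F : Set E} {v : ι → E} {lam Δ : ι → ℝ} {p q w xs z : E} {fstar D m s : ℝ}
    (hΔ : ∀ i, Δ i ∈ Icc 0 (lam i)) (hlam : ∑ i, lam i = 1) (hp : p = ∑ i, lam i • v i)
    (hxs : xs = ∑ i, (lam i - Δ i) • v i + (∑ i, Δ i) • z)
    (hΔm : ∑ i, Δ i ≤ m) (hm1 : m ≤ 1) (hs0 : 0 ≤ s) (hs1 : s ≤ 1)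
    (hfxs : f xs = fstar) (hxsF : xs ∈ F) (hzF : z ∈ F) (hzV : z ∈ convexHull ℝ (V ∩ F))
    (hDF : ∀ u ∈ F, ∀ u' ∈ F, ‖u - u'‖ ≤ D)
    (hw : ∀ u ∈ V,
      ⟪g p, w⟫ + β * (m * s) * ‖w - p‖ ^ 2 ≤ ⟪g p, u⟫ + β * (m * s) * ‖u - p‖ ^ 2)
    (hq : ∀ y ∈ convexHull ℝ (insert w (range v)),
      f q ≤ f p + ⟪g p, y - p⟫ + β / 2 * ‖y - p‖ ^ 2) :
    f q - fstar ≤ (1 - s) * (f p - fstar) + β * s ^ 2 * (2 * ‖p - xs‖ ^ 2 + 4 * m ^ 2 * D ^ 2) := by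
  set Δs := ∑ i, Δ i
  have hΔs0 : 0 ≤ Δs := Finset.sum_nonneg fun i _ => (hΔ i).1
  -- `xs` with `z` replaced by the new vertex `w`; the step towards it is the comparison point
  set u := ∑ i, (lam i - Δ i) • v i + Δs • w
  have hu : u = xs + Δs • (w - z) := by rw [hxs]; module
  have huT : u ∈ convexHull ℝ (insert w (range v)) :=
    sum_smul_add_smul_mem_convexHull_insert v w (fun i => sub_nonneg.2 (hΔ i).2) hΔs0
      (by simp [Δs, Finset.sum_sub_distrib, hlam])
  have hpT : p ∈ convexHull ℝ (insert w (range v)) := by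
    simpa [hp] using sum_smul_add_smul_mem_convexHull_insert v w
      (fun i => (hΔ i).1.trans (hΔ i).2) le_rfl (by simpa using hlam)
  have hmodel := hq _ ((convex_convexHull ℝ _).add_smul_sub_mem hpT huT ⟨hs0, hs1⟩)
  rw [add_sub_cancel_left, inner_smul_right, norm_smul, Real.norm_of_nonneg hs0] at hmodel
  have hfirst := hfconv.add_inner_sub_le hgrad p xs
  have horacle := inner_sub_le_of_forall_inner_add_sq_le
    (mul_nonneg hβ (mul_nonneg (hΔs0.trans hΔm) hs0)) hw (fun u hu => hDF u hu xs hxsF) hzV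
  have hinner : ⟪g p, u - p⟫ = ⟪g p, xs - p⟫ + Δs * ⟪g p, w - z⟫ := by
    rw [hu, add_sub_right_comm, inner_add_right, inner_smul_right]
  have hnorm : ‖u - p‖ ≤ (1 - Δs) * ‖p - xs‖ + Δs * ‖w - p‖ + Δs * D := by
    have h1 : 0 ≤ 1 - Δs := by linarith
    calc ‖u - p‖ = ‖(1 - Δs) • (xs - p) + Δs • (w - p) - Δs • (z - xs)‖ := by
          rw [hu]; congr 1; module
      _ ≤ ‖(1 - Δs) • (xs - p)‖ + ‖Δs • (w - p)‖ + ‖Δs • (z - xs)‖ :=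
          (norm_sub_le _ _).trans (by gcongr; exact norm_add_le _ _)
      _ ≤ (1 - Δs) * ‖p - xs‖ + Δs * ‖w - p‖ + Δs * D := by
          rw [norm_smul_of_nonneg h1, norm_smul_of_nonneg hΔs0, norm_smul_of_nonneg hΔs0,
            norm_sub_rev xs p]
          gcongr
          exact hDF z hzF xs hxsF
  have hquad := step_quadratic_term_le hΔs0 hΔm hm1 (norm_nonneg _) hnorm
  have hdescent : f q - fstar ≤ (1 - s) * (f p - fstar) + s * Δs * ⟪g p, w - z⟫
      + β / 2 * s ^ 2 * ‖u - p‖ ^ 2 := by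
    rw [hinner] at hmodel
    rw [← hfxs]
    linarith [mul_le_mul_of_nonneg_left hfirst hs0]
  have := mul_le_mul_of_nonneg_left horacle (mul_nonneg hs0 hΔs0)
  have := mul_le_mul_of_nonneg_left hquad (mul_nonneg hβ (sq_nonneg s))
  linarith

theorem gap_succ_le_exp_mul_of_gap_le {ι : Type*} [Fintype ι]
    (hfconv : ConvexOn ℝ univ f) (hgrad : ∀ y, HasGradientAt f (g y) y) {β : ℝ} (hβ : 0 ≤ β)
    {V F : Set E} {v : ι → E} {lam Δ : ι → ℝ} {p q w xs z : E} {fstar D α ν M K ρ : ℝ}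
    (hα : 0 < α) (hM : β / α * (4 + 8 * ν ^ 2 * D ^ 2) ≤ M) (hM2 : 1 / 2 ≤ M)
    (hgap : f p - fstar ≤ K) (hQG : ‖p - xs‖ ^ 2 ≤ 2 / α * (f p - fstar))
    (hρ : ρ = min √(ν ^ 2 * (2 / α * K)) 1 / (2 * M))
    (hΔ : ∀ i, Δ i ∈ Icc 0 (lam i)) (hlam : ∑ i, lam i = 1) (hp : p = ∑ i, lam i • v i)
    (hxs : xs = ∑ i, (lam i - Δ i) • v i + (∑ i, Δ i) • z)
    (hΔle : ∑ i, Δ i ≤ min (ν * ‖p - xs‖) 1)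
    (hfxs : f xs = fstar) (hxsF : xs ∈ F) (hzF : z ∈ F) (hzV : z ∈ convexHull ℝ (V ∩ F))
    (hDF : ∀ u ∈ F, ∀ u' ∈ F, ‖u - u'‖ ≤ D)
    (hw : ∀ u ∈ V, ⟪g p, w⟫ + β * ρ * ‖w - p‖ ^ 2 ≤ ⟪g p, u⟫ + β * ρ * ‖u - p‖ ^ 2)
    (hq : ∀ y ∈ convexHull ℝ (insert w (range v)),
      f q ≤ f p + ⟪g p, y - p⟫ + β / 2 * ‖y - p‖ ^ 2) :
    f q - fstar ≤ Real.exp (-(1 / (4 * M))) * K := by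
  set A := 2 / α * K
  have hr2 : ‖p - xs‖ ^ 2 ≤ A := hQG.trans (mul_le_mul_of_nonneg_left hgap (by positivity))
  have hK0 : 0 ≤ K :=
    hgap.trans' (nonneg_of_mul_nonneg_right ((sq_nonneg _).trans hQG) (by positivity))
  set m := min √(ν ^ 2 * A) 1
  have hm2 : m ^ 2 ≤ ν ^ 2 * A := by
    calc m ^ 2 ≤ √(ν ^ 2 * A) ^ 2 :=
          pow_le_pow_left₀ (le_min (Real.sqrt_nonneg _) zero_le_one) (min_le_left _ _) 2
      _ = ν ^ 2 * A := Real.sq_sqrt (mul_nonneg (sq_nonneg ν) ((sq_nonneg _).trans hr2))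
  have hΔm : ∑ i, Δ i ≤ m := by
    refine hΔle.trans (min_le_min_right 1 ((le_abs_self _).trans (Real.abs_le_sqrt ?_)))
    rw [mul_pow]
    exact mul_le_mul_of_nonneg_left hr2 (sq_nonneg ν)
  set s := 1 / (2 * M)
  have hs0 : 0 ≤ s := by positivity
  have hs1 : s ≤ 1 := by rw [div_le_one (by linarith)]; linarith
  have hρs : ρ = m * s := by rw [hρ]; ring
  have hstep := gap_succ_le_of_vertex_decomposition hfconv hgrad hβ hΔ hlam hp hxs hΔm
    (min_le_right _ _) hs0 hs1 hfxs hxsF hzF hzV hDF (hρs ▸ hw) hq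
  have hquad : β * (2 * ‖p - xs‖ ^ 2 + 4 * m ^ 2 * D ^ 2) ≤ M * K := by
    calc β * (2 * ‖p - xs‖ ^ 2 + 4 * m ^ 2 * D ^ 2)
        ≤ β * (2 * A + 4 * (ν ^ 2 * A) * D ^ 2) := by gcongr
      _ = β / α * (4 + 8 * ν ^ 2 * D ^ 2) * K := by simp only [A]; field_simp; ring
      _ ≤ M * K := by gcongr
  calc f q - fstar ≤ (1 - s) * K + s ^ 2 * (M * K) := by
        linarith [mul_le_mul_of_nonneg_left hgap (by linarith : (0:ℝ) ≤ 1 - s),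
          mul_le_mul_of_nonneg_left hquad (sq_nonneg s)]
    _ = (1 - 1 / (4 * M)) * K := by simp only [s]; field_simp; ring
    _ ≤ Real.exp (-(1 / (4 * M))) * K := by gcongr; exact Real.one_sub_le_exp_neg _

end InnerProductSpace

theorem fw_nep_polytope_linear_rate_general {d : ℕ}
    (V : Set (EuclideanSpace ℝ (Fin d))) (hVfin : V.Finite)
    (K : Set (EuclideanSpace ℝ (Fin d))) (hK : K = convexHull ℝ V)
    (f : EuclideanSpace ℝ (Fin d) → ℝ)
    (g : EuclideanSpace ℝ (Fin d) → EuclideanSpace ℝ (Fin d))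
    (hfconv : ConvexOn ℝ Set.univ f)
    (hgrad : ∀ y, HasGradientAt f (g y) y)
    (β : ℝ) (hβ : 0 < β)
    (hsmooth : ∀ y z, ‖g y - g z‖ ≤ β * ‖y - z‖)
    (fstar : ℝ)
    (Xstar : Set (EuclideanSpace ℝ (Fin d)))
    (hXstar : Xstar = {y | y ∈ K ∧ f y = fstar}) (hXne : Xstar.Nonempty)
    -- quadratic growth
    (α : ℝ) (hα : 0 < α)
    (hQG : ∀ y ∈ K, infDist y Xstar ^ 2 ≤ 2 / α * (f y - fstar))
    -- the set F*
    (Fstar : Set (EuclideanSpace ℝ (Fin d)))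
    (hXF : Xstar ⊆ Fstar)
    (hFvert : ∀ y ∈ Fstar, y ∈ convexHull ℝ (V ∩ Fstar))
    (DF : ℝ) (hDF : ∀ u ∈ Fstar, ∀ w ∈ Fstar, ‖u - w‖ ≤ DF)
    -- constants
    (μ C M : ℝ)
    (hM : max (β / α * (4 + 8 * d * μ ^ 2 * DF ^ 2)) (1 / 2) ≤ M)
    -- step-size parameters
    (ρ : ℕ → ℝ)
    (hρ : ∀ t : ℕ, 1 ≤ t → ρ t =
      min (Real.sqrt (2 * C * d * μ ^ 2 / α * Real.exp (-(((t : ℝ) - 1) / (4 * M))))) 1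
        / (2 * M))
    -- the iterates and their vertex decompositions
    (x : ℕ → EuclideanSpace ℝ (Fin d))
    (k : ℕ → ℕ) (vv : ∀ t : ℕ, Fin (k t) → EuclideanSpace ℝ (Fin d))
    (lam : ∀ t : ℕ, Fin (k t) → ℝ) (w : ℕ → EuclideanSpace ℝ (Fin d))
    (hC : f (x 1) - fstar ≤ C)
    (hvvV : ∀ t, 1 ≤ t → ∀ i, vv t i ∈ V)
    (hlam0 : ∀ t, 1 ≤ t → ∀ i, 0 ≤ lam t i)
    (hlam1 : ∀ t, 1 ≤ t → ∑ i, lam t i = 1)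
    (hxdecomp : ∀ t, 1 ≤ t → x t = ∑ i, lam t i • vv t i)
    (hwopt : ∀ t, 1 ≤ t → ∀ u ∈ V,
      ⟪g (x t), w t⟫ + β * ρ t * ‖w t - x t‖ ^ 2
        ≤ ⟪g (x t), u⟫ + β * ρ t * ‖u - x t‖ ^ 2)
    (hstep : ∀ t, 1 ≤ t →
      (x (t + 1) ∈ convexHull ℝ (insert (w t) (Set.range (vv t))) ∧
        ∀ y ∈ convexHull ℝ (insert (w t) (Set.range (vv t))),
          ⟪g (x t), x (t + 1)⟫ + β / 2 * ‖x (t + 1) - x t‖ ^ 2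
            ≤ ⟪g (x t), y⟫ + β / 2 * ‖y - x t‖ ^ 2) ∨
      (x (t + 1) ∈ convexHull ℝ (insert (w t) (Set.range (vv t))) ∧
        ∀ y ∈ convexHull ℝ (insert (w t) (Set.range (vv t))), f (x (t + 1)) ≤ f y))
    -- the vertex-decomposition property relative to the closest optimal point
    (hclose : ∀ t, 1 ≤ t → ∀ xst ∈ Xstar, (∀ y ∈ Xstar, ‖x t - xst‖ ≤ ‖x t - y‖) →
      ∃ Δ : Fin (k t) → ℝ, ∃ z ∈ Fstar,
        (∀ i, Δ i ∈ Set.Icc 0 (lam t i)) ∧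
        xst = ∑ i, (lam t i - Δ i) • vv t i + (∑ i, Δ i) • z ∧
        ∑ i, Δ i ≤ min (Real.sqrt d * μ * ‖x t - xst‖) 1) :
    ∀ t : ℕ, 1 ≤ t →
      f (x t) - fstar ≤ C * Real.exp (-(((t : ℝ) - 1) / (4 * M))) := by
  have hfcont : Continuous f :=
    continuous_iff_continuousAt.2 fun y => (hgrad y).differentiableAt.continuousAt
  have hXcpt : IsCompact Xstar := by
    rw [hXstar, hK]
    exact (hVfin.isCompact_convexHull ℝ).inter_right (isClosed_eq hfcont continuous_const)
  have hν : (Real.sqrt d * μ) ^ 2 = d * μ ^ 2 := by rw [mul_pow, Real.sq_sqrt d.cast_nonneg]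
  intro t ht
  induction t, ht using Nat.le_induction with
  | base => simpa using hC
  | succ t ht ih =>
    have hxtK : x t ∈ K := hK ▸ hxdecomp t ht ▸ (convex_convexHull ℝ V).sum_mem
      (fun i _ => hlam0 t ht i) (hlam1 t ht) fun i _ => subset_convexHull ℝ V (hvvV t ht i)
    obtain ⟨xs, hxsX, hdist⟩ := hXcpt.exists_infDist_eq_dist hXne (x t)
    obtain ⟨Δ, z, hzF, hΔ, hxs, hΔle⟩ := hclose t ht xs hxsX fun y hy => by
      simpa only [← dist_eq_norm, ← hdist] using infDist_le_dist_of_mem hy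
    have hgap := gap_succ_le_exp_mul_of_gap_le hfconv hgrad hβ.le hα
      (by rw [hν, ← mul_assoc]; exact (le_max_left _ _).trans hM)
      ((le_max_right _ _).trans hM) ih
      (by rw [← dist_eq_norm, ← hdist]; exact hQG _ hxtK)
      (by rw [hρ t ht, hν]; congr 3; ring)
      hΔ (hlam1 t ht) (hxdecomp t ht) hxs hΔle (hXstar ▸ hxsX).2 (hXF hxsX) hzF
      (hFvert z hzF) hDF (hwopt t ht)
      (le_add_inner_add_sq_of_corrective_step hgrad hsmooth (hstep t ht))
    refine hgap.trans_eq ?_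
    rw [mul_left_comm, ← Real.exp_add]
    congr 2
    push_cast
    ring

/-- linear convergence of the NEP oracle-based fully-corrective
Frank-Wolfe variant for polytopes under quadratic growth (Theorem 3). -/
theorem fw_nep_polytope_linear_rate {d : ℕ}
    (V : Set (EuclideanSpace ℝ (Fin d))) (hVfin : V.Finite)
    (K : Set (EuclideanSpace ℝ (Fin d))) (hK : K = convexHull ℝ V)
    (hVext : V = K.extremePoints ℝ)
    (f : EuclideanSpace ℝ (Fin d) → ℝ)
    (g : EuclideanSpace ℝ (Fin d) → EuclideanSpace ℝ (Fin d))
    (hfconv : ConvexOn ℝ Set.univ f)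
    (hgrad : ∀ y, HasGradientAt f (g y) y)
    (β : ℝ) (hβ : 0 < β)
    (hsmooth : ∀ y z, ‖g y - g z‖ ≤ β * ‖y - z‖)
    (fstar : ℝ) (hfstar : ∀ y ∈ K, fstar ≤ f y)
    (Xstar : Set (EuclideanSpace ℝ (Fin d)))
    (hXstar : Xstar = {y | y ∈ K ∧ f y = fstar}) (hXne : Xstar.Nonempty)
    -- quadratic growth
    (α : ℝ) (hα : 0 < α)
    (hQG : ∀ y ∈ K, infDist y Xstar ^ 2 ≤ 2 / α * (f y - fstar))
    -- the set F*
    (Fstar : Set (EuclideanSpace ℝ (Fin d)))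
    (hFK : Fstar ⊆ K) (hFconv : Convex ℝ Fstar) (hXF : Xstar ⊆ Fstar)
    (hFvert : ∀ y ∈ Fstar, y ∈ convexHull ℝ (V ∩ Fstar))
    (DF : ℝ) (hDF : ∀ u ∈ Fstar, ∀ w ∈ Fstar, ‖u - w‖ ≤ DF)
    -- constants
    (μ C M : ℝ) (hμ : 0 < μ)
    (hM : max (β / α * (4 + 8 * d * μ ^ 2 * DF ^ 2)) (1 / 2) ≤ M)
    -- step-size parameters
    (ρ : ℕ → ℝ)
    (hρ : ∀ t : ℕ, 1 ≤ t → ρ t =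
      min (Real.sqrt (2 * C * d * μ ^ 2 / α * Real.exp (-(((t : ℝ) - 1) / (4 * M))))) 1
        / (2 * M))
    -- the iterates and their vertex decompositions
    (x : ℕ → EuclideanSpace ℝ (Fin d))
    (k : ℕ → ℕ) (vv : ∀ t : ℕ, Fin (k t) → EuclideanSpace ℝ (Fin d))
    (lam : ∀ t : ℕ, Fin (k t) → ℝ) (w : ℕ → EuclideanSpace ℝ (Fin d))
    (hx1 : x 1 ∈ V) (hC : f (x 1) - fstar ≤ C)
    (hvvV : ∀ t, 1 ≤ t → ∀ i, vv t i ∈ V)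
    (hlam0 : ∀ t, 1 ≤ t → ∀ i, 0 ≤ lam t i)
    (hlam1 : ∀ t, 1 ≤ t → ∑ i, lam t i = 1)
    (hxdecomp : ∀ t, 1 ≤ t → x t = ∑ i, lam t i • vv t i)
    (hwV : ∀ t, 1 ≤ t → w t ∈ V)
    (hwopt : ∀ t, 1 ≤ t → ∀ u ∈ V,
      ⟪g (x t), w t⟫ + β * ρ t * ‖w t - x t‖ ^ 2
        ≤ ⟪g (x t), u⟫ + β * ρ t * ‖u - x t‖ ^ 2)
    (hstep : ∀ t, 1 ≤ t →
      (x (t + 1) ∈ convexHull ℝ (insert (w t) (Set.range (vv t))) ∧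
        ∀ y ∈ convexHull ℝ (insert (w t) (Set.range (vv t))),
          ⟪g (x t), x (t + 1)⟫ + β / 2 * ‖x (t + 1) - x t‖ ^ 2
            ≤ ⟪g (x t), y⟫ + β / 2 * ‖y - x t‖ ^ 2) ∨
      (x (t + 1) ∈ convexHull ℝ (insert (w t) (Set.range (vv t))) ∧
        ∀ y ∈ convexHull ℝ (insert (w t) (Set.range (vv t))), f (x (t + 1)) ≤ f y))
    -- the vertex-decomposition property relative to the closest optimal point
    (hclose : ∀ t, 1 ≤ t → ∀ xst ∈ Xstar, (∀ y ∈ Xstar, ‖x t - xst‖ ≤ ‖x t - y‖) →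
      ∃ Δ : Fin (k t) → ℝ, ∃ z ∈ Fstar,
        (∀ i, Δ i ∈ Set.Icc 0 (lam t i)) ∧
        xst = ∑ i, (lam t i - Δ i) • vv t i + (∑ i, Δ i) • z ∧
        ∑ i, Δ i ≤ min (Real.sqrt d * μ * ‖x t - xst‖) 1) :
    ∀ t : ℕ, 1 ≤ t →
      f (x t) - fstar ≤ C * Real.exp (-(((t : ℝ) - 1) / (4 * M))) :=
  fw_nep_polytope_linear_rate_general V hVfin K hK f g hfconv hgrad β hβ hsmooth fstar Xstar hXstar
    hXne α hα hQG Fstar hXF hFvert DF hDF μ C M hM ρ hρ x k vv lam w hC hvvV hlam0 hlam1 hxdecomp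
    hwopt hstep hclose
end

section
/- Let x_t ∈ K, let x* ∈ X* be the point of X* closest to x_t, let g ∈ ℝ^d, η ∈ [0,1], let v_t ∈ argmin_{v∈V} ( gᵀv + (βη/2)‖v − x_t‖² ), and set x_{t+1} = (1−η)x_t + η v_t. Then, with M̄ = min{ (D*)² + dist(x_t, X*)², D_K² }: f(x_{t+1}) − f(x_t) ≤ η(f(x*) − f(x_t)) + η·D_K·‖g − ∇f(x_t)‖ + (βη²/2)·M̄. -/
open scoped RealInnerProductSpace
open Metric

/-! By the descent lemma, `f x_{t+1} - f x_t ≤ η (⟪∇f x_t, v_t - x_t⟫ + (βη/2) ‖v_t - x_t‖²)`.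
The oracle value `⟪g, v_t⟫ + (βη/2) ‖v_t - x_t‖²` is at most its value at some point `y ∈ S*`, and
since `x* ∈ conv S*` a linear functional cannot be larger at every point of `S*` than at `x*`;
choosing the functional well gives a `y` whose value is at most `⟪g, x*⟫ + (βη/2) M̄`. Convexity
turns `⟪∇f x_t, x* - x_t⟫` into `f x* - f x_t`, and Cauchy–Schwarz pays `D_K ‖g - ∇f x_t‖` for
using `g` in place of `∇f x_t`. -/

section ConvexHull

variable {E : Type*} [NormedAddCommGroup E] [InnerProductSpace ℝ E]

theorem exists_inner_le_of_mem_convexHull {S : Set E} {p : E} (hp : p ∈ convexHull ℝ S) (a : E) :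
    ∃ y ∈ S, ⟪a, y⟫ ≤ ⟪a, p⟫ :=
  ((innerₛₗ ℝ a).concaveOn convex_univ).exists_le_of_mem_convexHull (Set.subset_univ S) hp

theorem norm_sub_le_of_mem_convexHull {S : Set E} {D : ℝ}
    (hD : ∀ u ∈ S, ∀ v ∈ S, ‖u - v‖ ≤ D) {p y : E} (hp : p ∈ convexHull ℝ S) (hy : y ∈ S) :
    ‖y - p‖ ≤ D := by
  obtain ⟨z, hz, hpz⟩ := convexHull_exists_dist_ge hp y
  rw [dist_eq_norm, dist_eq_norm, norm_sub_rev] at hpz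
  exact hpz.trans (hD z hz y hy)

theorem inner_add_mul_norm_sq_le_of_mem_convexHull {S : Set E} {g x v₀ p : E} {c D R : ℝ}
    (hc : 0 ≤ c) (hmin : ∀ v ∈ S, ⟪g, v₀⟫ + c * ‖v₀ - x‖ ^ 2 ≤ ⟪g, v⟫ + c * ‖v - x‖ ^ 2)
    (hp : p ∈ convexHull ℝ S) (hD : ∀ u ∈ S, ∀ v ∈ S, ‖u - v‖ ≤ D)
    (hR : ∀ v ∈ S, ‖v - x‖ ≤ R) :
    ⟪g, v₀⟫ + c * ‖v₀ - x‖ ^ 2 ≤ ⟪g, p⟫ + c * min (D ^ 2 + ‖p - x‖ ^ 2) (R ^ 2) := by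
  have hdiam : ⟪g, v₀⟫ + c * ‖v₀ - x‖ ^ 2 ≤ ⟪g, p⟫ + c * (D ^ 2 + ‖p - x‖ ^ 2) := by
    -- `⟪g, y⟫ + c ‖y - x‖²` is `⟪g + 2c (p - x), y⟫ + c ‖y - p‖²` up to a constant
    obtain ⟨y, hyS, hy⟩ := exists_inner_le_of_mem_convexHull hp (g + (2 * c) • (p - x))
    have hyp : ‖y - p‖ ^ 2 ≤ D ^ 2 :=
      pow_le_pow_left₀ (norm_nonneg _) (norm_sub_le_of_mem_convexHull hD hp hyS) 2
    have hsplit : ‖y - x‖ ^ 2 = ‖y - p‖ ^ 2 + 2 * ⟪y - p, p - x⟫ + ‖p - x‖ ^ 2 := by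
      rw [← norm_add_sq_real, sub_add_sub_cancel]
    simp only [inner_add_left, inner_smul_left, inner_sub_left, inner_sub_right,
      real_inner_comm (p - x), RCLike.conj_to_real] at hy hsplit
    nlinarith [hmin y hyS]
  have hradius : ⟪g, v₀⟫ + c * ‖v₀ - x‖ ^ 2 ≤ ⟪g, p⟫ + c * R ^ 2 := by
    obtain ⟨y, hyS, hy⟩ := exists_inner_le_of_mem_convexHull hp g
    have hyx : ‖y - x‖ ^ 2 ≤ R ^ 2 := pow_le_pow_left₀ (norm_nonneg _) (hR y hyS) 2
    nlinarith [hmin y hyS]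
  rw [mul_min_of_nonneg _ _ hc, ← min_add_add_left]
  exact le_min hdiam hradius

end ConvexHull

section Gradient

variable {E : Type*} [NormedAddCommGroup E] [InnerProductSpace ℝ E] [CompleteSpace E]
  {f : E → ℝ}

theorem HasGradientAt.hasDerivAt_comp_add_smul {f' x h : E} {t : ℝ}
    (hf : HasGradientAt f f' (x + t • h)) :
    HasDerivAt (fun s : ℝ => f (x + s • h)) ⟪f', h⟫ t := by
  have hline : HasDerivAt (fun s : ℝ => x + s • h) h t := by
    simpa using ((hasDerivAt_id t).smul_const h).const_add x
  exact hf.hasFDerivAt.comp_hasDerivAt t hline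

theorem ConvexOn.inner_gradient_le_sub {f' x : E} (hf : ConvexOn ℝ Set.univ f)
    (hx : HasGradientAt f f' x) (y : E) : ⟪f', y - x⟫ ≤ f y - f x := by
  have hline : ConvexOn ℝ Set.univ fun t : ℝ => f (x + t • (y - x)) := by
    have hcomp : (fun t : ℝ => f (x + t • (y - x))) = f ∘ AffineMap.lineMap x y := by
      funext t
      simp [AffineMap.lineMap_apply_module', add_comm]
    simpa [hcomp] using hf.comp_affineMap (AffineMap.lineMap x y)
  have hderiv : HasDerivAt (fun t : ℝ => f (x + t • (y - x))) ⟪f', y - x⟫ 0 :=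
    HasGradientAt.hasDerivAt_comp_add_smul (by simpa using hx)
  simpa [slope_def_field] using
    hline.le_slope_of_hasDerivAt (Set.mem_univ 0) (Set.mem_univ 1) zero_lt_one hderiv

theorem le_add_inner_gradient_add_half_mul_norm_sq {f' : E → E} {β : ℝ} {x : E}
    (hf : ∀ z, HasGradientAt f (f' z) z) (hL : ∀ z, ‖f' z - f' x‖ ≤ β * ‖z - x‖) (y : E) :
    f y ≤ f x + ⟪f' x, y - x⟫ + β / 2 * ‖y - x‖ ^ 2 := by
  set h := y - x
  set χ : ℝ → ℝ := fun t => f (x + t • h) - t * ⟪f' x, h⟫ - β / 2 * t ^ 2 * ‖h‖ ^ 2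
  have hχ : ∀ t, HasDerivAt χ (⟪f' (x + t • h), h⟫ - ⟪f' x, h⟫ - β * t * ‖h‖ ^ 2) t := by
    intro t
    have hsum := ((hf (x + t • h)).hasDerivAt_comp_add_smul.sub
      ((hasDerivAt_id t).mul_const ⟪f' x, h⟫)).sub
      (((hasDerivAt_pow 2 t).const_mul (β / 2)).mul_const (‖h‖ ^ 2))
    exact hsum.congr_deriv (by simp only [Nat.cast_ofNat]; ring)
  have hslope : ∀ t ∈ interior (Set.Icc (0 : ℝ) 1),
      ⟪f' (x + t • h), h⟫ - ⟪f' x, h⟫ - β * t * ‖h‖ ^ 2 ≤ 0 := by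
    intro t ht
    rw [interior_Icc] at ht
    have hLt := hL (x + t • h)
    rw [add_sub_cancel_left, norm_smul, Real.norm_of_nonneg ht.1.le] at hLt
    rw [sub_nonpos]
    calc ⟪f' (x + t • h), h⟫ - ⟪f' x, h⟫ = ⟪f' (x + t • h) - f' x, h⟫ := (inner_sub_left ..).symm
      _ ≤ ‖f' (x + t • h) - f' x‖ * ‖h‖ := real_inner_le_norm _ _
      _ ≤ β * (t * ‖h‖) * ‖h‖ := by gcongr
      _ = β * t * ‖h‖ ^ 2 := by ring
  have hanti : AntitoneOn χ (Set.Icc 0 1) :=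
    antitoneOn_of_hasDerivWithinAt_nonpos (convex_Icc 0 1)
      (fun t _ => (hχ t).continuousAt.continuousWithinAt)
      (fun t _ => (hχ t).hasDerivWithinAt) hslope
  have h10 := hanti (Set.left_mem_Icc.2 zero_le_one) (Set.right_mem_Icc.2 zero_le_one) zero_le_one
  simp only [χ, h, one_smul, zero_smul, add_zero, add_sub_cancel] at h10
  linarith

end Gradient

theorem fw_nep_stochastic_one_step_general {d : ℕ}
    (K : Set (EuclideanSpace ℝ (Fin d)))
    (V : Set (EuclideanSpace ℝ (Fin d))) (hV : V = K.extremePoints ℝ)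
    (DK : ℝ) (hDK : ∀ u ∈ K, ∀ w ∈ K, ‖u - w‖ ≤ DK)
    (f : EuclideanSpace ℝ (Fin d) → ℝ)
    (gradf : EuclideanSpace ℝ (Fin d) → EuclideanSpace ℝ (Fin d))
    (hfconv : ConvexOn ℝ Set.univ f)
    (hgrad : ∀ y, HasGradientAt f (gradf y) y)
    (fstar : ℝ)
    (Xstar : Set (EuclideanSpace ℝ (Fin d)))
    (hXstar : Xstar = {y | y ∈ K ∧ f y = fstar})
    (Sstar : Set (EuclideanSpace ℝ (Fin d))) (hSV : Sstar ⊆ V)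
    (hSconv : Xstar ⊆ convexHull ℝ Sstar)
    (Dstar : ℝ) (hDstar : ∀ u ∈ Sstar, ∀ v ∈ Sstar, ‖u - v‖ ≤ Dstar)
    (xt : EuclideanSpace ℝ (Fin d)) (hxt : xt ∈ K)
    -- the closest optimal solution to x_t
    (xstar : EuclideanSpace ℝ (Fin d)) (hxstarX : xstar ∈ Xstar)
    (hxstarclose : ∀ y ∈ Xstar, ‖xt - xstar‖ ≤ ‖xt - y‖)
    -- an arbitrary vector g (e.g. a stochastic gradient estimate)
    (g : EuclideanSpace ℝ (Fin d))
    (η β : ℝ) (hη : η ∈ Set.Icc (0:ℝ) 1) (hβ : 0 < β)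
    (hsmooth : ∀ y z, ‖gradf y - gradf z‖ ≤ β * ‖y - z‖)
    (vt : EuclideanSpace ℝ (Fin d)) (hvtV : vt ∈ V)
    (hvt : ∀ v ∈ V, ⟪g, vt⟫ + β * η / 2 * ‖vt - xt‖ ^ 2
        ≤ ⟪g, v⟫ + β * η / 2 * ‖v - xt‖ ^ 2)
    (xnext : EuclideanSpace ℝ (Fin d))
    (hxnext : xnext = (1 - η) • xt + η • vt) :
    f xnext - f xt ≤ η * (f xstar - f xt) + η * DK * ‖g - gradf xt‖
      + β * η ^ 2 / 2 * min (Dstar ^ 2 + infDist xt Xstar ^ 2) (DK ^ 2) := by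
  have hVK : V ⊆ K := hV ▸ extremePoints_subset
  have hxstarK : xstar ∈ K := (hXstar ▸ hxstarX).1
  have hdist : ‖xstar - xt‖ ≤ infDist xt Xstar :=
    (le_infDist ⟨xstar, hxstarX⟩).2 fun y hy => by
      simpa only [dist_eq_norm, norm_sub_rev xstar] using hxstarclose y hy
  have horacle : ⟪g, vt⟫ + β * η / 2 * ‖vt - xt‖ ^ 2
      ≤ ⟪g, xstar⟫ + β * η / 2 * min (Dstar ^ 2 + infDist xt Xstar ^ 2) (DK ^ 2) := by
    have hc : 0 ≤ β * η / 2 := by have := hη.1; positivity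
    refine (inner_add_mul_norm_sq_le_of_mem_convexHull hc (fun v hv => hvt v (hSV hv))
      (hSconv hxstarX) hDstar fun v hv => hDK v (hVK (hSV hv)) xt hxt).trans ?_
    gcongr
  have hconv := hfconv.inner_gradient_le_sub (hgrad xt) xstar
  have herror : ⟪g - gradf xt, xstar - vt⟫ ≤ ‖g - gradf xt‖ * DK :=
    (real_inner_le_norm _ _).trans
      (mul_le_mul_of_nonneg_left (hDK _ hxstarK _ (hVK hvtV)) (norm_nonneg _))
  have hsplit : ⟪gradf xt, vt - xt⟫ = ⟪g, vt⟫ - ⟪g, xstar⟫ + ⟪gradf xt, xstar - xt⟫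
      + ⟪g - gradf xt, xstar - vt⟫ := by
    simp only [inner_sub_left, inner_sub_right]
    ring
  have hdescent := le_add_inner_gradient_add_half_mul_norm_sq hgrad (fun z => hsmooth z xt) xnext
  rw [show xnext - xt = η • (vt - xt) by rw [hxnext]; module, inner_smul_right, norm_smul,
    Real.norm_of_nonneg hη.1, mul_pow] at hdescent
  have hkey : ⟪gradf xt, vt - xt⟫ + β * η / 2 * ‖vt - xt‖ ^ 2
      ≤ f xstar - f xt + ‖g - gradf xt‖ * DK
        + β * η / 2 * min (Dstar ^ 2 + infDist xt Xstar ^ 2) (DK ^ 2) := by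
    linarith
  linarith [mul_le_mul_of_nonneg_left hkey hη.1]

/-- the per-step inequality for the stochastic Frank-Wolfe
variant with a nearest extreme point oracle (from Lemma 4 of the paper). -/
theorem fw_nep_stochastic_one_step {d : ℕ}
    (K : Set (EuclideanSpace ℝ (Fin d)))
    (hKconv : Convex ℝ K) (hKcomp : IsCompact K)
    (V : Set (EuclideanSpace ℝ (Fin d))) (hV : V = K.extremePoints ℝ)
    (DK : ℝ) (hDK : ∀ u ∈ K, ∀ w ∈ K, ‖u - w‖ ≤ DK)
    (f : EuclideanSpace ℝ (Fin d) → ℝ)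
    (gradf : EuclideanSpace ℝ (Fin d) → EuclideanSpace ℝ (Fin d))
    (hfconv : ConvexOn ℝ Set.univ f)
    (hgrad : ∀ y, HasGradientAt f (gradf y) y)
    (fstar : ℝ) (hfstar : ∀ y ∈ K, fstar ≤ f y)
    (Xstar : Set (EuclideanSpace ℝ (Fin d)))
    (hXstar : Xstar = {y | y ∈ K ∧ f y = fstar}) (hXne : Xstar.Nonempty)
    (Sstar : Set (EuclideanSpace ℝ (Fin d))) (hSV : Sstar ⊆ V)
    (hSconv : Xstar ⊆ convexHull ℝ Sstar)
    (Dstar : ℝ) (hDstar : ∀ u ∈ Sstar, ∀ v ∈ Sstar, ‖u - v‖ ≤ Dstar)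
    (xt : EuclideanSpace ℝ (Fin d)) (hxt : xt ∈ K)
    -- the closest optimal solution to x_t
    (xstar : EuclideanSpace ℝ (Fin d)) (hxstarX : xstar ∈ Xstar)
    (hxstarclose : ∀ y ∈ Xstar, ‖xt - xstar‖ ≤ ‖xt - y‖)
    -- an arbitrary vector g (e.g. a stochastic gradient estimate)
    (g : EuclideanSpace ℝ (Fin d))
    (η β : ℝ) (hη : η ∈ Set.Icc (0:ℝ) 1) (hβ : 0 < β)
    (hsmooth : ∀ y z, ‖gradf y - gradf z‖ ≤ β * ‖y - z‖)
    (vt : EuclideanSpace ℝ (Fin d)) (hvtV : vt ∈ V)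
    (hvt : ∀ v ∈ V, ⟪g, vt⟫ + β * η / 2 * ‖vt - xt‖ ^ 2
        ≤ ⟪g, v⟫ + β * η / 2 * ‖v - xt‖ ^ 2)
    (xnext : EuclideanSpace ℝ (Fin d))
    (hxnext : xnext = (1 - η) • xt + η • vt) :
    f xnext - f xt ≤ η * (f xstar - f xt) + η * DK * ‖g - gradf xt‖
      + β * η ^ 2 / 2 * min (Dstar ^ 2 + infDist xt Xstar ^ 2) (DK ^ 2) :=
  fw_nep_stochastic_one_step_general K V hV DK hDK f gradf hfconv hgrad fstar Xstar hXstar Sstar hSV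
    hSconv Dstar hDstar xt hxt xstar hxstarX hxstarclose g η β hη hβ hsmooth vt hvtV hvt xnext
    hxnext
end
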